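/- Let F be in the Hardy–Sobolev space W^{1,2} with finitely many roots α_1,…,α_m in D and Blaschke decomposition F = B·G. Then ‖G‖_{W^{1,2}}^2 ≤ ‖F‖_{W^{1,2}}^2 − Σ_{j=1}^m (1−|α_j|^2)·[ 2‖G(e^{i·})/(1−ᾱ_j e^{i·})‖_D^2 − ‖G(e^{i·})/(1−ᾱ_j e^{i·})‖_{H^2}^2 ]. -/

import Mathlib

open Finset

/-- Hardy–Sobolev `W^{1,2}` norm squared in terms of Taylor coefficients. -/
noncomputable def wnorm2 (a : ℕ → ℂ) : ℝ := ∑' n : ℕ, (1 + (n : ℝ) ^ 2) * ‖a n‖ ^ 2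

/-- Dirichlet norm squared. -/
noncomputable def dnorm2 (a : ℕ → ℂ) : ℝ := ∑' n : ℕ, ((n : ℝ) + 1) * ‖a n‖ ^ 2

/-- `H²` norm squared. -/
noncomputable def h2norm2 (a : ℕ → ℂ) : ℝ := ∑' n, ‖a n‖ ^ 2

def IsCoeffs (a : ℕ → ℂ) (F : ℂ → ℂ) : Prop :=
  ∀ z : ℂ, ‖z‖ < 1 → HasSum (fun n => a n * z ^ n) (F z)

/-!
Peel the zeros off one at a time. If the coefficients `b` of `B_α · W`, where
`B_α z = (z - α) / (1 - ᾱ z)`, satisfy `∑ w n ‖b n‖² < ∞` for an increasing weight `w ≥ 1`,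
then `B_α α = 0` makes `k n = ∑ⱼ αʲ b (n + 1 + j)` the coefficients of `W / (1 - ᾱ z)`,
and Cauchy–Schwarz against the geometric weights `|α|ʲ` keeps `k` in the weighted space.
On coefficients `b = z k - α k` and `W = k - ᾱ z k`, so summing
`‖x - α y‖² - ‖y - ᾱ x‖² = (1 - ‖α‖²) (‖x‖² - ‖y‖²)` against `w` gives
`‖b‖²_w = ‖W‖²_w + (1 - ‖α‖²) ‖k‖²_{Δw}` with `Δw n = w (n + 1) - w n`.
For `w n = 1 + n²` we get `Δw n = 2 n + 1` and `‖k‖²_{Δw} = 2 ‖k‖²_𝒟 - ‖k‖²_{H²}`.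

When `α_j` is peeled, `k` belongs to `(∏ remaining factors) · G / (1 - ᾱ_j z)` rather than to
`G / (1 - ᾱ_j z)`. Since `Δw` is itself increasing, the same identity with weight `Δw` shows
that removing Blaschke factors never increases the `Δw`-norm, which yields the inequality.
-/

open Filter Topology FormalMultilinearSeries fwdDiff

noncomputable section

def shiftRight (k : ℕ → ℂ) : ℕ → ℂ
  | 0 => 0
  | n + 1 => k n

@[simp] lemma shiftRight_zero (k : ℕ → ℂ) : shiftRight k 0 = 0 := rfl
@[simp] lemma shiftRight_succ (k : ℕ → ℂ) (n : ℕ) : shiftRight k (n + 1) = k n := rfl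

lemma hasSum_shiftRight_mul_pow {k : ℕ → ℂ} {z s : ℂ} (h : HasSum (fun n => k n * z ^ n) s) :
    HasSum (fun n => shiftRight k n * z ^ n) (z * s) :=
  (hasSum_nat_add_iff' 1).mp (by simpa [pow_succ', mul_left_comm] using h.mul_left z)

namespace IsCoeffs

variable {a b k : ℕ → ℂ} {F G K : ℂ → ℂ}

lemma one_le_radius (h : IsCoeffs a F) : 1 ≤ (ofScalars ℂ a).radius := by
  refine ENNReal.le_of_forall_nnreal_lt fun r hr => ?_
  have hr' : ‖((r : ℝ) : ℂ)‖ < 1 := by simpa using hr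
  refine (ofScalars ℂ a).le_radius_of_tendsto (l := 0) ?_
  simpa [ofScalars_norm] using (h _ hr').summable.tendsto_atTop_zero.norm

lemma hasFPowerSeriesOnBall (h : IsCoeffs a F) :
    HasFPowerSeriesOnBall F (ofScalars ℂ a) 0 1 where
  r_le := h.one_le_radius
  r_pos := one_pos
  hasSum {y} hy := by
    have hy' : ‖y‖ < 1 := by simpa [← ENNReal.coe_one, Metric.eball_coe] using hy
    simpa [ofScalars_apply_eq, mul_comm] using h y hy'

lemma continuousOn (h : IsCoeffs a F) : ContinuousOn F (Metric.ball 0 1) := by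
  simpa [← ENNReal.coe_one, Metric.eball_coe] using h.hasFPowerSeriesOnBall.continuousOn

lemma unique (ha : IsCoeffs a F) (hb : IsCoeffs b F) : a = b :=
  ofScalars_series_injective ℂ (E := ℂ)
    (ha.hasFPowerSeriesOnBall.hasFPowerSeriesAt.eq_formalMultilinearSeries
      hb.hasFPowerSeriesOnBall.hasFPowerSeriesAt)

lemma shiftRight_sub_smul (h : IsCoeffs k K) (α : ℂ) :
    IsCoeffs (shiftRight k - α • k) (fun z => (z - α) * K z) := fun z hz => by
  show HasSum _ ((z - α) * K z)
  rw [sub_mul]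
  exact ((hasSum_shiftRight_mul_pow (h z hz)).sub ((h z hz).mul_left α)).congr_fun fun n => by
    simp only [Pi.sub_apply, Pi.smul_apply, smul_eq_mul]; ring

lemma sub_smul_shiftRight (h : IsCoeffs k K) (α : ℂ) :
    IsCoeffs (k - α • shiftRight k) (fun z => (1 - α * z) * K z) := fun z hz => by
  show HasSum _ ((1 - α * z) * K z)
  rw [sub_mul, one_mul, mul_assoc]
  exact ((h z hz).sub ((hasSum_shiftRight_mul_pow (h z hz)).mul_left α)).congr_fun fun n => by
    simp only [Pi.sub_apply, Pi.smul_apply, smul_eq_mul]; ring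

lemma congr (h : IsCoeffs a F) (hFG : ∀ z, ‖z‖ < 1 → F z = G z) : IsCoeffs a G :=
  fun z hz => hFG z hz ▸ h z hz

end IsCoeffs

lemma isCoeffs_tsum_of_norm_le {a : ℕ → ℂ} {C : ℝ} (ha : ∀ n, ‖a n‖ ≤ C) :
    IsCoeffs a (fun z => ∑' n, a n * z ^ n) := by
  intro z hz
  refine (Summable.of_norm_bounded ((summable_geometric_of_lt_one (norm_nonneg z) hz).mul_left C)
    fun n => ?_).hasSum
  rw [norm_mul, norm_pow]
  exact mul_le_mul_of_nonneg_right (ha n) (by positivity)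

variable {w : ℕ → ℝ} {α : ℂ} {b k : ℕ → ℂ}

def wnormSq (w : ℕ → ℝ) (a : ℕ → ℂ) : ℝ := ∑' n, w n * ‖a n‖ ^ 2

lemma sq_norm_le_wnormSq (hw : ∀ n, 1 ≤ w n) (hb : Summable fun n => w n * ‖b n‖ ^ 2) (n : ℕ) :
    ‖b n‖ ^ 2 ≤ wnormSq w b :=
  calc ‖b n‖ ^ 2 ≤ w n * ‖b n‖ ^ 2 := le_mul_of_one_le_left (sq_nonneg _) (hw n)
    _ ≤ wnormSq w b := hb.le_tsum n fun j _ => mul_nonneg (zero_le_one.trans (hw j)) (sq_nonneg _)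

lemma norm_le_sqrt_wnormSq (hw : ∀ n, 1 ≤ w n) (hb : Summable fun n => w n * ‖b n‖ ^ 2)
    (n : ℕ) : ‖b n‖ ≤ √(wnormSq w b) :=
  Real.le_sqrt_of_sq_le (sq_norm_le_wnormSq hw hb n)

lemma norm_sub_mul_sq_sub_norm_sub_conj_mul_sq (α x y : ℂ) :
    ‖x - α * y‖ ^ 2 - ‖y - (starRingEnd ℂ) α * x‖ ^ 2 = (1 - ‖α‖ ^ 2) * (‖x‖ ^ 2 - ‖y‖ ^ 2) := by
  simp only [Complex.sq_norm, Complex.normSq_apply, Complex.sub_re, Complex.sub_im,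
    Complex.mul_re, Complex.mul_im, Complex.conj_re, Complex.conj_im]
  ring

lemma wnormSq_shiftRight_sub_smul (hk : Summable fun n => w n * ‖k n‖ ^ 2)
    (hk' : Summable fun n => w (n + 1) * ‖k n‖ ^ 2)
    (hb : Summable fun n => w n * ‖(shiftRight k - α • k) n‖ ^ 2) :
    (Summable fun n => w n * ‖(k - (starRingEnd ℂ) α • shiftRight k) n‖ ^ 2) ∧
      wnormSq w (shiftRight k - α • k) = wnormSq w (k - (starRingEnd ℂ) α • shiftRight k) +
        (1 - ‖α‖ ^ 2) * wnormSq (Δ_[1] w) k := by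
  have hshift : Summable fun n => w n * ‖shiftRight k n‖ ^ 2 := (summable_nat_add_iff 1).mp hk'
  have hpt : ∀ n, w n * ‖(k - (starRingEnd ℂ) α • shiftRight k) n‖ ^ 2 =
      w n * ‖(shiftRight k - α • k) n‖ ^ 2 -
        (1 - ‖α‖ ^ 2) * (w n * ‖shiftRight k n‖ ^ 2 - w n * ‖k n‖ ^ 2) := by
    intro n
    have := norm_sub_mul_sq_sub_norm_sub_conj_mul_sq α (shiftRight k n) (k n)
    simp only [Pi.sub_apply, Pi.smul_apply, smul_eq_mul]
    linear_combination (-w n) * this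
  have hc : Summable fun n => w n * ‖(k - (starRingEnd ℂ) α • shiftRight k) n‖ ^ 2 := by
    simpa only [hpt] using hb.sub ((hshift.sub hk).mul_left _)
  refine ⟨hc, ?_⟩
  have htsum_shift : ∑' n, w n * ‖shiftRight k n‖ ^ 2 = ∑' n, w (n + 1) * ‖k n‖ ^ 2 := by
    simp [hshift.tsum_eq_zero_add]
  have hΔ : wnormSq (Δ_[1] w) k = ∑' n, w (n + 1) * ‖k n‖ ^ 2 - ∑' n, w n * ‖k n‖ ^ 2 := by
    rw [wnormSq, ← hk'.tsum_sub hk]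
    exact tsum_congr fun n => sub_mul _ _ _
  rw [wnormSq, wnormSq, tsum_congr hpt, hb.tsum_sub ((hshift.sub hk).mul_left _), tsum_mul_left,
    hshift.tsum_sub hk, htsum_shift, hΔ]
  ring

-- When `B α = 0` for `B z = ∑ b n * z ^ n`, these are the coefficients of `B z / (z - α)`.
def divXSub (α : ℂ) (b : ℕ → ℂ) (n : ℕ) : ℂ := ∑' j, α ^ j * b (n + 1 + j)

lemma summable_norm_geometric_mul_of_norm_le {C : ℝ} (hb : ∀ n, ‖b n‖ ≤ C) (hα : ‖α‖ < 1)
    (f : ℕ → ℕ) : Summable fun j => ‖α ^ j * b (f j)‖ := by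
  refine .of_nonneg_of_le (fun _ => norm_nonneg _) (fun j => ?_)
    ((summable_geometric_of_lt_one (norm_nonneg α) hα).mul_right C)
  rw [norm_mul, norm_pow]
  exact mul_le_mul_of_nonneg_left (hb _) (by positivity)

lemma shiftRight_divXSub_sub_smul {C : ℝ} (hb : ∀ n, ‖b n‖ ≤ C) (hα : ‖α‖ < 1)
    (h0 : HasSum (fun n => b n * α ^ n) 0) :
    shiftRight (divXSub α b) - α • divXSub α b = b := by
  have hsum n := (summable_norm_geometric_mul_of_norm_le hb hα (fun j => n + 1 + j)).of_norm
  funext n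
  rcases n with _ | n
  · have h0' := h0.tsum_eq
    rw [h0.summable.tsum_eq_zero_add] at h0'
    have : α * divXSub α b 0 = ∑' j, b (j + 1) * α ^ (j + 1) := by
      rw [divXSub, ← tsum_mul_left]
      exact tsum_congr fun j => by rw [zero_add, add_comm 1 j, pow_succ]; ring
    simp only [Pi.sub_apply, Pi.smul_apply, smul_eq_mul, shiftRight_zero]
    linear_combination -h0' - this
  · have hrec : divXSub α b n = b (n + 1) + α * divXSub α b (n + 1) := by
      rw [divXSub, (hsum n).tsum_eq_zero_add, divXSub, ← tsum_mul_left]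
      congr 1
      · simp
      · exact tsum_congr fun j => by rw [← mul_assoc, ← pow_succ']; ring_nf
    simp only [Pi.sub_apply, Pi.smul_apply, smul_eq_mul, shiftRight_succ]
    linear_combination hrec

lemma sq_tsum_geometric_mul_le {r : ℝ} (hr0 : 0 ≤ r) (hr1 : r < 1) {x : ℕ → ℝ}
    (hx1 : Summable fun j => r ^ j * x j)
    (hx2 : Summable fun j => r ^ j * x j ^ 2) :
    (∑' j, r ^ j * x j) ^ 2 ≤ (1 - r)⁻¹ * ∑' j, r ^ j * x j ^ 2 := by
  refine le_of_tendsto' ((hx1.hasSum.tendsto_sum_nat).pow 2) fun N => ?_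
  calc (∑ j ∈ range N, r ^ j * x j) ^ 2
      ≤ (∑ j ∈ range N, r ^ j) * ∑ j ∈ range N, r ^ j * x j ^ 2 :=
        sum_sq_le_sum_mul_sum_of_sq_le_mul _ (fun j _ => by positivity)
          (fun j _ => by positivity) (fun j _ => le_of_eq (by ring))
    _ ≤ (1 - r)⁻¹ * ∑' j, r ^ j * x j ^ 2 := by
        refine mul_le_mul ?_ (hx2.sum_le_tsum _ fun j _ => by positivity)
          (sum_nonneg fun j _ => by positivity) (inv_nonneg.mpr (by linarith))
        rw [← tsum_geometric_of_lt_one hr0 hr1]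
        exact (summable_geometric_of_lt_one hr0 hr1).sum_le_tsum _ fun j _ => by positivity

lemma summable_tsum_geometric_mul_shift {r : ℝ} (hr0 : 0 ≤ r) (hr1 : r < 1) {β : ℕ → ℝ}
    (hβ0 : ∀ n, 0 ≤ β n) (hβ : Summable β) :
    Summable fun n => ∑' j, r ^ j * β (n + 1 + j) := by
  have hinj (j : ℕ) : Function.Injective fun n => n + 1 + j := fun a b h => by simpa using h
  have hswap : Summable fun p : ℕ × ℕ => r ^ p.1 * β (p.2 + 1 + p.1) := by
    refine (summable_prod_of_nonneg (f := fun p : ℕ × ℕ => r ^ p.1 * β (p.2 + 1 + p.1))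
      fun p => mul_nonneg (pow_nonneg hr0 _) (hβ0 _)).mpr
      ⟨fun j => (hβ.comp_injective (hinj j)).mul_left (r ^ j), ?_⟩
    refine .of_nonneg_of_le (fun j => tsum_nonneg fun n => mul_nonneg (pow_nonneg hr0 _) (hβ0 _))
      (fun j => ?_) ((summable_geometric_of_lt_one hr0 hr1).mul_right (∑' n, β n))
    dsimp only
    rw [tsum_mul_left]
    exact mul_le_mul_of_nonneg_left ((hβ.comp_injective (hinj j)).tsum_le_tsum_of_inj _ (hinj j)
      (fun _ _ => hβ0 _) (fun _ => le_rfl) hβ) (pow_nonneg hr0 _)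
  exact ((summable_prod_of_nonneg (f := fun p : ℕ × ℕ => r ^ p.2 * β (p.1 + 1 + p.2))
    fun p => mul_nonneg (pow_nonneg hr0 _) (hβ0 _)).mp hswap.prod_symm).2

lemma summable_weight_succ_mul_sq_norm_divXSub (hw : ∀ n, 1 ≤ w n) (hwm : Monotone w)
    (hα : ‖α‖ < 1) (hb : Summable fun n => w n * ‖b n‖ ^ 2) :
    Summable fun n => w (n + 1) * ‖divXSub α b n‖ ^ 2 := by
  set r := ‖α‖
  have hr0 : 0 ≤ r := norm_nonneg α
  have hw0 (n : ℕ) : 0 ≤ w n := zero_le_one.trans (hw n)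
  have hβ0 (n : ℕ) : 0 ≤ w n * ‖b n‖ ^ 2 := mul_nonneg (hw0 n) (sq_nonneg _)
  have hgeom := summable_geometric_of_lt_one hr0 hα
  refine .of_nonneg_of_le (fun n => mul_nonneg (hw0 _) (sq_nonneg _)) (fun n => ?_)
    ((summable_tsum_geometric_mul_shift hr0 hα hβ0 hb).mul_left (1 - r)⁻¹)
  have hinj : Function.Injective fun j => n + 1 + j := fun a b h => by simpa using h
  have habs := summable_norm_geometric_mul_of_norm_le (norm_le_sqrt_wnormSq hw hb) hα (fun j => n + 1 + j)
  simp only [norm_mul, norm_pow] at habs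
  have hsq : Summable fun j => r ^ j * ‖b (n + 1 + j)‖ ^ 2 :=
    .of_nonneg_of_le (fun j => by positivity)
      (fun j => mul_le_mul_of_nonneg_left (sq_norm_le_wnormSq hw hb _) (pow_nonneg hr0 j))
      (hgeom.mul_right _)
  have hβ : Summable fun j => r ^ j * (w (n + 1 + j) * ‖b (n + 1 + j)‖ ^ 2) :=
    .of_nonneg_of_le (fun j => mul_nonneg (pow_nonneg hr0 j) (hβ0 _))
      (fun j => mul_le_of_le_one_left (hβ0 _) (pow_le_one₀ hr0 hα.le))
      (hb.comp_injective hinj)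
  have hnorm : ‖divXSub α b n‖ ≤ ∑' j, r ^ j * ‖b (n + 1 + j)‖ := by
    refine (norm_tsum_le_tsum_norm ?_).trans_eq (tsum_congr fun j => by rw [norm_mul, norm_pow])
    simpa only [norm_mul, norm_pow] using habs
  have hr1 : 0 ≤ (1 - r)⁻¹ := inv_nonneg.mpr (by linarith)
  calc w (n + 1) * ‖divXSub α b n‖ ^ 2
      ≤ w (n + 1) * ((1 - r)⁻¹ * ∑' j, r ^ j * ‖b (n + 1 + j)‖ ^ 2) :=
        mul_le_mul_of_nonneg_left ((pow_le_pow_left₀ (norm_nonneg _) hnorm 2).trans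
          (sq_tsum_geometric_mul_le hr0 hα habs hsq)) (hw0 _)
    _ = (1 - r)⁻¹ * ∑' j, r ^ j * (w (n + 1) * ‖b (n + 1 + j)‖ ^ 2) := by
        rw [← tsum_mul_left, ← tsum_mul_left, ← tsum_mul_left]
        exact tsum_congr fun j => by ring
    _ ≤ (1 - r)⁻¹ * ∑' j, r ^ j * (w (n + 1 + j) * ‖b (n + 1 + j)‖ ^ 2) := by
        refine mul_le_mul_of_nonneg_left (Summable.tsum_le_tsum (fun j => ?_)
          ((hsq.mul_left (w (n + 1))).congr fun j => by ring) hβ) hr1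
        exact mul_le_mul_of_nonneg_left (mul_le_mul_of_nonneg_right (hwm (by omega))
          (sq_nonneg _)) (pow_nonneg hr0 j)

def blaschke (a z : ℂ) : ℂ := (z - a) / (1 - starRingEnd ℂ a * z)

lemma one_sub_conj_mul_ne_zero {a z : ℂ} (ha : ‖a‖ < 1) (hz : ‖z‖ < 1) :
    1 - starRingEnd ℂ a * z ≠ 0 := by
  refine sub_ne_zero.mpr fun h => ?_
  have : ‖starRingEnd ℂ a * z‖ < 1 := by
    rw [norm_mul, RCLike.norm_conj]
    exact mul_lt_one_of_nonneg_of_lt_one_left (norm_nonneg a) ha hz.le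
  simp [← h] at this

lemma continuousOn_div_one_sub_conj_mul {a : ℂ} (ha : ‖a‖ < 1) {W : ℂ → ℂ}
    (hW : ContinuousOn W (Metric.ball 0 1)) :
    ContinuousOn (fun z => W z / (1 - starRingEnd ℂ a * z)) (Metric.ball 0 1) :=
  hW.div (by fun_prop) fun z hz => one_sub_conj_mul_ne_zero ha (mem_ball_zero_iff.mp hz)

lemma continuousOn_blaschke {a : ℂ} (ha : ‖a‖ < 1) : ContinuousOn (blaschke a) (Metric.ball 0 1) :=
  continuousOn_div_one_sub_conj_mul ha (W := fun z => z - a) (by fun_prop)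

lemma isCoeffs_div_one_sub_conj_mul (hα : ‖α‖ < 1) {W : ℂ → ℂ}
    (hW : ContinuousOn W (Metric.ball 0 1)) {C : ℝ} (hk : ∀ n, ‖k n‖ ≤ C)
    (h : IsCoeffs (shiftRight k - α • k) (fun z => blaschke α z * W z)) :
    IsCoeffs k (fun z => W z / (1 - starRingEnd ℂ α * z)) := by
  set K := fun z => ∑' n, k n * z ^ n
  set V := fun z => W z / (1 - starRingEnd ℂ α * z)
  have hK : IsCoeffs k K := isCoeffs_tsum_of_norm_le hk
  have hKV : ∀ z, ‖z‖ < 1 → z ≠ α → K z = V z := by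
    intro z hz hzα
    have := ((hK.shiftRight_sub_smul α) z hz).unique (h z hz)
    simp only [blaschke, div_mul_eq_mul_div, mul_div_assoc] at this
    exact mul_left_cancel₀ (sub_ne_zero.mpr hzα) this
  -- at `z = α` the factor `z - α` cannot be cancelled, so continuity has to do it
  have hKVα : K α = V α := by
    have hball : Metric.ball (0 : ℂ) 1 ∈ 𝓝 α := Metric.isOpen_ball.mem_nhds (by simpa using hα)
    refine tendsto_nhds_unique (f := K) (l := 𝓝[≠] α)
      ((hK.continuousOn.continuousAt hball).tendsto.mono_left nhdsWithin_le_nhds) ?_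
    refine ((continuousOn_div_one_sub_conj_mul hα hW).continuousAt hball |>.tendsto.mono_left
      nhdsWithin_le_nhds).congr' ?_
    filter_upwards [self_mem_nhdsWithin, nhdsWithin_le_nhds hball] with z hzα hz
    exact (hKV z (mem_ball_zero_iff.mp hz) hzα).symm
  intro z hz
  rcases eq_or_ne z α with rfl | hzα
  · exact hKVα ▸ hK z hz
  · exact hKV z hz hzα ▸ hK z hz

lemma exists_isCoeffs_wnormSq_eq_of_blaschke_mul (hw : ∀ n, 1 ≤ w n) (hwm : Monotone w)
    (hα : ‖α‖ < 1) {W : ℂ → ℂ} (hW : ContinuousOn W (Metric.ball 0 1))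
    (hb : IsCoeffs b (fun z => blaschke α z * W z)) (hbw : Summable fun n => w n * ‖b n‖ ^ 2) :
    ∃ c k, IsCoeffs c W ∧ IsCoeffs k (fun z => W z / (1 - starRingEnd ℂ α * z)) ∧
      (Summable fun n => w n * ‖c n‖ ^ 2) ∧
      (Summable fun n => Δ_[1] w n * ‖k n‖ ^ 2) ∧
      wnormSq w b = wnormSq w c + (1 - ‖α‖ ^ 2) * wnormSq (Δ_[1] w) k := by
  have hb0 : HasSum (fun n => b n * α ^ n) 0 := by simpa [blaschke] using hb α hα
  set k := divXSub α b
  have hbk : shiftRight k - α • k = b :=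
    shiftRight_divXSub_sub_smul (norm_le_sqrt_wnormSq hw hbw) hα hb0
  have hk1 := summable_weight_succ_mul_sq_norm_divXSub hw hwm hα hbw
  have hk0 : Summable fun n => w n * ‖k n‖ ^ 2 :=
    hk1.of_nonneg_of_le (fun n => mul_nonneg (zero_le_one.trans (hw n)) (sq_nonneg _))
      fun n => mul_le_mul_of_nonneg_right (hwm n.le_succ) (sq_nonneg _)
  have hkW : IsCoeffs k (fun z => W z / (1 - starRingEnd ℂ α * z)) :=
    isCoeffs_div_one_sub_conj_mul hα hW
      (norm_le_sqrt_wnormSq hw hk0) (hbk ▸ hb)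
  obtain ⟨hc, hnorm⟩ := wnormSq_shiftRight_sub_smul hk0 hk1 (hbk ▸ hbw)
  refine ⟨k - starRingEnd ℂ α • shiftRight k, k, ?_, hkW, hc,
    (hk1.sub hk0).congr fun n => (sub_mul _ _ _).symm, hbk ▸ hnorm⟩
  refine (hkW.sub_smul_shiftRight _).congr fun z hz => ?_
  exact mul_div_cancel₀ _ (one_sub_conj_mul_ne_zero hα hz)

lemma continuousOn_prod_blaschke_mul {ι : Type*} {s : Finset ι} {a : ι → ℂ}
    (ha : ∀ j ∈ s, ‖a j‖ < 1) {W : ℂ → ℂ} (hW : ContinuousOn W (Metric.ball 0 1)) :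
    ContinuousOn (fun z => (∏ j ∈ s, blaschke (a j) z) * W z) (Metric.ball 0 1) :=
  (continuousOn_finsetProd s fun j hj => continuousOn_blaschke (ha j hj)).mul hW

lemma isCoeffs_prod_insert_blaschke_mul {ι : Type*} [DecidableEq ι] {s : Finset ι} {i : ι}
    (hi : i ∉ s) {a : ι → ℂ} {W : ℂ → ℂ}
    (hb : IsCoeffs b (fun z => (∏ j ∈ insert i s, blaschke (a j) z) * W z)) :
    IsCoeffs b (fun z => blaschke (a i) z * ((∏ j ∈ s, blaschke (a j) z) * W z)) :=
  hb.congr fun z _ => by rw [prod_insert hi, mul_assoc]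

lemma exists_isCoeffs_wnormSq_le_of_prod_blaschke_mul (hw : ∀ n, 1 ≤ w n) (hwm : Monotone w)
    {ι : Type*} {s : Finset ι} {a : ι → ℂ} (ha : ∀ j ∈ s, ‖a j‖ < 1) {W : ℂ → ℂ}
    (hW : ContinuousOn W (Metric.ball 0 1)) (b : ℕ → ℂ)
    (hb : IsCoeffs b (fun z => (∏ j ∈ s, blaschke (a j) z) * W z))
    (hbw : Summable fun n => w n * ‖b n‖ ^ 2) :
    ∃ c, IsCoeffs c W ∧ (Summable fun n => w n * ‖c n‖ ^ 2) ∧ wnormSq w c ≤ wnormSq w b := by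
  classical
  induction s using Finset.induction_on generalizing b with
  | empty => exact ⟨b, hb.congr fun z _ => by simp, hbw, le_rfl⟩
  | insert i s hi ih =>
    have ha' : ∀ j ∈ s, ‖a j‖ < 1 := fun j hj => ha j (mem_insert_of_mem hj)
    obtain ⟨c, k, hc, -, hcw, hkw, hnorm⟩ := exists_isCoeffs_wnormSq_eq_of_blaschke_mul hw hwm
      (ha i (mem_insert_self i s)) (continuousOn_prod_blaschke_mul ha' hW)
      (isCoeffs_prod_insert_blaschke_mul hi hb) hbw
    obtain ⟨d, hd, hdw, hdc⟩ := ih ha' c hc hcw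
    refine ⟨d, hd, hdw, hdc.trans ?_⟩
    have : 0 ≤ (1 - ‖a i‖ ^ 2) * wnormSq (Δ_[1] w) k :=
      mul_nonneg (by nlinarith [ha i (mem_insert_self i s), norm_nonneg (a i)])
        (tsum_nonneg fun n => mul_nonneg (sub_nonneg.mpr (hwm n.le_succ)) (sq_nonneg _))
    linarith

lemma wnormSq_add_sum_le_of_prod_blaschke_mul (hw : ∀ n, 1 ≤ w n) (hΔ : ∀ n, 1 ≤ Δ_[1] w n)
    (hΔm : Monotone (Δ_[1] w)) {ι : Type*} {s : Finset ι} {a : ι → ℂ} (ha : ∀ j ∈ s, ‖a j‖ < 1)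
    {g : ℕ → ℂ} {G : ℂ → ℂ} (hg : IsCoeffs g G) {K : ι → ℕ → ℂ}
    (hK : ∀ j ∈ s, IsCoeffs (K j) (fun z => G z / (1 - starRingEnd ℂ (a j) * z))) (b : ℕ → ℂ)
    (hb : IsCoeffs b (fun z => (∏ j ∈ s, blaschke (a j) z) * G z))
    (hbw : Summable fun n => w n * ‖b n‖ ^ 2) :
    (∀ j ∈ s, Summable fun n => Δ_[1] w n * ‖K j n‖ ^ 2) ∧
      wnormSq w g + ∑ j ∈ s, (1 - ‖a j‖ ^ 2) * wnormSq (Δ_[1] w) (K j) ≤ wnormSq w b := by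
  classical
  have hwm : Monotone w := monotone_nat_of_le_succ fun n => sub_nonneg.mp (zero_le_one.trans (hΔ n))
  induction s using Finset.induction_on generalizing b with
  | empty => simp [hg.unique (hb.congr fun z _ => by simp)]
  | insert i s hi ih =>
    have hai := ha i (mem_insert_self i s)
    have ha' : ∀ j ∈ s, ‖a j‖ < 1 := fun j hj => ha j (mem_insert_of_mem hj)
    obtain ⟨c, k, hc, hk, hcw, hkw, hnorm⟩ := exists_isCoeffs_wnormSq_eq_of_blaschke_mul hw hwm hai
      (continuousOn_prod_blaschke_mul ha' hg.continuousOn) (isCoeffs_prod_insert_blaschke_mul hi hb)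
      hbw
    obtain ⟨hKs, hgc⟩ := ih ha' (fun j hj => hK j (mem_insert_of_mem hj)) c hc hcw
    obtain ⟨d, hd, hdw, hdk⟩ := exists_isCoeffs_wnormSq_le_of_prod_blaschke_mul hΔ hΔm ha'
      (continuousOn_div_one_sub_conj_mul hai hg.continuousOn) k
      (hk.congr fun z _ => mul_div_assoc _ _ _) hkw
    obtain rfl : d = K i := hd.unique (hK i (mem_insert_self i s))
    refine ⟨fun j hj => (mem_insert.mp hj).elim (fun hji => hji ▸ hdw) (hKs j), ?_⟩
    have hai2 : 0 ≤ 1 - ‖a i‖ ^ 2 := by nlinarith [norm_nonneg (a i)]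
    rw [sum_insert hi]
    nlinarith [mul_le_mul_of_nonneg_left hdk hai2]

lemma fwdDiff_one_add_sq : Δ_[1] (fun n : ℕ => 1 + (n : ℝ) ^ 2) = fun n : ℕ => 2 * (n : ℝ) + 1 := by
  funext n
  simp only [fwdDiff, Nat.cast_add, Nat.cast_one]
  ring

lemma two_mul_dnorm2_sub_h2norm2 {a : ℕ → ℂ}
    (ha : Summable fun n : ℕ => (2 * n + 1 : ℝ) * ‖a n‖ ^ 2) :
    (Summable fun n : ℕ => ((n : ℝ) + 1) * ‖a n‖ ^ 2) ∧
      2 * dnorm2 a - h2norm2 a = wnormSq (fun n : ℕ => 2 * (n : ℝ) + 1) a := by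
  have hD : Summable fun n : ℕ => ((n : ℝ) + 1) * ‖a n‖ ^ 2 :=
    ha.of_nonneg_of_le (fun n => by positivity) fun n => by
      gcongr; linarith [n.cast_nonneg (α := ℝ)]
  have hH : Summable fun n : ℕ => ‖a n‖ ^ 2 :=
    hD.of_nonneg_of_le (fun n => by positivity) fun n => le_mul_of_one_le_left (by positivity)
      (by linarith [n.cast_nonneg (α := ℝ)])
  refine ⟨hD, ?_⟩
  rw [dnorm2, h2norm2, wnormSq, ← tsum_mul_left, ← (hD.mul_left 2).tsum_sub hH]
  exact tsum_congr fun n => by ring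

end

theorem stmt6_general (m : ℕ) (α : ℕ → ℂ) (hα : ∀ j ∈ Icc 1 m, ‖α j‖ < 1)
    (F G : ℂ → ℂ) (f g : ℕ → ℂ) (K : ℕ → ℕ → ℂ)
    (hf : IsCoeffs f F) (hg : IsCoeffs g G)
    (hfac : ∀ z : ℂ, ‖z‖ < 1 →
      F z = (∏ j ∈ Icc 1 m, (z - α j) / (1 - (starRingEnd ℂ) (α j) * z)) * G z)
    -- `K j` are the Taylor coefficients of `G(z)/(1-ᾱ_j z)`
    (hK : ∀ j ∈ Icc 1 m, ∀ z : ℂ, ‖z‖ < 1 →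
      HasSum (fun n => K j n * z ^ n) (G z / (1 - (starRingEnd ℂ) (α j) * z)))
    -- `F ∈ W^{1,2}`
    (hW : Summable fun n : ℕ => (1 + (n : ℝ) ^ 2) * ‖f n‖ ^ 2) :
    (∀ j ∈ Icc 1 m, Summable fun n : ℕ => ((n : ℝ) + 1) * ‖K j n‖ ^ 2) ∧
      wnorm2 g ≤ wnorm2 f -
        ∑ j ∈ Icc 1 m,
          (1 - ‖α j‖ ^ 2) * (2 * dnorm2 (K j) - h2norm2 (K j)) := by
  obtain ⟨hKw, hle⟩ := wnormSq_add_sum_le_of_prod_blaschke_mul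
    (fun n => le_add_of_nonneg_right (sq_nonneg _))
    (fun n => by rw [fwdDiff_one_add_sq]; linarith [n.cast_nonneg (α := ℝ)])
    (by rw [fwdDiff_one_add_sq]; exact fun a b hab => by dsimp only; gcongr)
    hα hg hK f (hf.congr hfac) hW
  rw [fwdDiff_one_add_sq] at hKw hle
  refine ⟨fun j hj => (two_mul_dnorm2_sub_h2norm2 (hKw j hj)).1, ?_⟩
  rw [sum_congr rfl fun j hj => by rw [(two_mul_dnorm2_sub_h2norm2 (hKw j hj)).2]]
  exact le_sub_iff_add_le.mpr hle

/-- Corollary 2: for `F ∈ W^{1,2}` with finitely many roots `α_1,…,α_m` in `𝔻` and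
Blaschke decomposition `F = B·G`,
`‖G‖²_{W^{1,2}} ≤ ‖F‖²_{W^{1,2}} − Σ_j (1-|α_j|²)[2‖G/(1-ᾱ_j·)‖²_𝒟 − ‖G/(1-ᾱ_j·)‖²_{H²}]`. -/
theorem stmt6 (m : ℕ) (α : ℕ → ℂ) (hα : ∀ j ∈ Icc 1 m, ‖α j‖ < 1)
    (F G : ℂ → ℂ) (f g : ℕ → ℂ) (K : ℕ → ℕ → ℂ)
    (hf : IsCoeffs f F) (hg : IsCoeffs g G)
    (hG0 : ∀ z : ℂ, ‖z‖ < 1 → G z ≠ 0)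
    (hfac : ∀ z : ℂ, ‖z‖ < 1 →
      F z = (∏ j ∈ Icc 1 m, (z - α j) / (1 - (starRingEnd ℂ) (α j) * z)) * G z)
    -- `K j` are the Taylor coefficients of `G(z)/(1-ᾱ_j z)`
    (hK : ∀ j ∈ Icc 1 m, ∀ z : ℂ, ‖z‖ < 1 →
      HasSum (fun n => K j n * z ^ n) (G z / (1 - (starRingEnd ℂ) (α j) * z)))
    -- `F ∈ W^{1,2}`
    (hW : Summable fun n : ℕ => (1 + (n : ℝ) ^ 2) * ‖f n‖ ^ 2) :
    (∀ j ∈ Icc 1 m, Summable fun n : ℕ => ((n : ℝ) + 1) * ‖K j n‖ ^ 2) ∧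
      wnorm2 g ≤ wnorm2 f -
        ∑ j ∈ Icc 1 m,
          (1 - ‖α j‖ ^ 2) * (2 * dnorm2 (K j) - h2norm2 (K j)) :=
  stmt6_general m α hα F G f g K hf hg hfac hK hW
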